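/- Let M₁ be the 2×2 matrix over A = 𝔽₂[x^{±1}, y^{±1}, z^{±1}] with first row (x·y⁻¹ + z⁻², y⁻¹) and second row (x, 1), and for n ≥ 2 let β_n ∈ A be the (1,1) entry of M₁^n. Then the monomials with exponent vectors (0,0,−2n), (1,−1,0) and (n,−n,0) all appear in β_n with coefficient 1, and the Newton polytope of β_n equals the convex hull in ℝ³ of {(1,−1,0), (n,−n,0), (0,0,−2n)}. -/

import Mathlib

/-- The Laurent polynomial ring `𝔽₂[x^{±1}, y^{±1}, z^{±1}]`, realized as the group
algebra of `ℤ³` over `𝔽₂`. -/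
abbrev LaurentA : Type := AddMonoidAlgebra (ZMod 2) (Fin 3 → ℤ)

/-- The monomial `x^a y^b z^c` corresponding to the exponent vector `(a,b,c) ∈ ℤ³`. -/
noncomputable def lmon (v : Fin 3 → ℤ) : LaurentA := AddMonoidAlgebra.single v 1

/-- The matrix `M₁` with rows `(x·y⁻¹ + z⁻², y⁻¹)` and `(x, 1)`. -/
noncomputable def stmtM1 : Matrix (Fin 2) (Fin 2) LaurentA :=
  !![lmon ![1, -1, 0] + lmon ![0, 0, -2], lmon ![0, -1, 0]; lmon ![1, 0, 0], 1]

/-- `β_n` is the `(1,1)` entry of `M₁ ^ n`. -/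
noncomputable def stmtBeta (n : ℕ) : LaurentA := (stmtM1 ^ n) 0 0

noncomputable def stmtGamma (n : ℕ) : LaurentA := (stmtM1 ^ n) 1 0

lemma lmon_mul_apply (u : Fin 3 → ℤ) (f : LaurentA) (v : Fin 3 → ℤ) :
    (lmon u * f).coeff v = f.coeff (-u + v) := by
  simp [lmon, AddMonoidAlgebra.coeff_single_mul_apply]

lemma vec3_eq_iff {a b c a' b' c' : ℤ} :
    (![a,b,c] : Fin 3 → ℤ) = ![a',b',c'] ↔ a = a' ∧ b = b' ∧ c = c' := by
  constructor
  · intro h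
    exact ⟨congrFun h 0, congrFun h 1, congrFun h 2⟩
  · rintro ⟨rfl, rfl, rfl⟩; rfl

lemma vec3_neg_add (a b c a' b' c' : ℤ) :
    -(![a,b,c] : Fin 3 → ℤ) + ![a',b',c'] = ![a'-a, b'-b, c'-c] := by
  funext i; fin_cases i <;> simp <;> ring

lemma vec3_add (a b c a' b' c' : ℤ) :
    (![a,b,c] : Fin 3 → ℤ) + ![a',b',c'] = ![a+a', b+b', c+c'] := by
  funext i; fin_cases i <;> simp

lemma beta_succ_apply (n : ℕ) (v : Fin 3 → ℤ) :
    (stmtBeta (n+1)).coeff v = (stmtBeta n).coeff (-![1,-1,0] + v) + (stmtBeta n).coeff (-![0,0,-2] + v)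
      + (stmtGamma n).coeff (-![0,-1,0] + v) := by
  have h : stmtM1 ^ (n+1) = stmtM1 * stmtM1 ^ n := pow_succ' _ _
  have e00 : stmtM1 0 0 = lmon ![1,-1,0] + lmon ![0,0,-2] := rfl
  have e01 : stmtM1 0 1 = lmon ![0,-1,0] := rfl
  rw [stmtBeta, stmtBeta, stmtGamma, h, Matrix.mul_apply, Fin.sum_univ_two, e00, e01, add_mul]
  rw [AddMonoidAlgebra.coeff_add, AddMonoidAlgebra.coeff_add, Finsupp.add_apply, Finsupp.add_apply, lmon_mul_apply, lmon_mul_apply, lmon_mul_apply]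

lemma gamma_succ_apply (n : ℕ) (v : Fin 3 → ℤ) :
    (stmtGamma (n+1)).coeff v = (stmtBeta n).coeff (-![1,0,0] + v) + (stmtGamma n).coeff v := by
  have h : stmtM1 ^ (n+1) = stmtM1 * stmtM1 ^ n := pow_succ' _ _
  have e10 : stmtM1 1 0 = lmon ![1,0,0] := rfl
  have e11 : stmtM1 1 1 = 1 := rfl
  rw [stmtGamma, stmtGamma, stmtBeta, h, Matrix.mul_apply, Fin.sum_univ_two, e10, e11, one_mul]
  rw [AddMonoidAlgebra.coeff_add, Finsupp.add_apply, lmon_mul_apply]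

lemma key : ∀ n : ℕ, 1 ≤ n →
    (∀ v ∈ (stmtBeta n).coeff.support, ∃ k m : ℕ,
        v = ![(k:ℤ), -(k:ℤ), -2*(m:ℤ)] ∧ k + m ≤ n ∧ (1 ≤ k ∨ m = n)) ∧
    (stmtBeta n).coeff ![0, 0, -(2 * (n : ℤ))] = 1 ∧
    (stmtBeta n).coeff ![1, -1, 0] = 1 ∧
    (stmtBeta n).coeff ![(n : ℤ), -(n : ℤ), 0] = 1 ∧
    (∀ v ∈ (stmtGamma n).coeff.support, ∃ k m : ℕ,
        v = ![(k:ℤ)+1, -(k:ℤ), -2*(m:ℤ)] ∧ k + m + 1 ≤ n) ∧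
    (stmtGamma n).coeff ![1, 0, 0] = 1 := by
  intro n
  induction n with
  | zero => omega
  | succ n ih =>
    intro _
    by_cases h1 : 1 ≤ n
    · obtain ⟨ihS, ihC, ihA, ihN, ihG, ihD⟩ := ih h1
      -- a reusable zero coefficient
      have hz0 : (stmtBeta n).coeff ![(0:ℤ), 0, 0] = 0 := by
        by_contra hz
        obtain ⟨k, m, hv, hle, hk⟩ := ihS _ (Finsupp.mem_support_iff.2 hz)
        obtain ⟨e1, e2, e3⟩ := vec3_eq_iff.1 hv
        omega
      refine ⟨?_, ?_, ?_, ?_, ?_, ?_⟩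
      · -- support of beta (n+1)
        intro v hv
        have h := Finsupp.mem_support_iff.1 hv
        rw [beta_succ_apply] at h
        have h3 : (stmtBeta n).coeff (-![1,-1,0] + v) ≠ 0 ∨ (stmtBeta n).coeff (-![0,0,-2] + v) ≠ 0 ∨
            (stmtGamma n).coeff (-![0,-1,0] + v) ≠ 0 := by
          by_contra hc
          push_neg at hc
          rw [hc.1, hc.2.1, hc.2.2] at h
          simp at h
        rcases h3 with h3 | h3 | h3
        · obtain ⟨k, m, he, hle, hk⟩ := ihS _ (Finsupp.mem_support_iff.2 h3)
          have hv' : v = ![1,-1,0] + ![(k:ℤ), -(k:ℤ), -2*(m:ℤ)] := by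
            rw [← he, add_neg_cancel_left]
          refine ⟨k+1, m, ?_, by omega, by omega⟩
          rw [hv', vec3_add]
          exact vec3_eq_iff.2 ⟨by push_cast; ring, by push_cast; ring, by push_cast; ring⟩
        · obtain ⟨k, m, he, hle, hk⟩ := ihS _ (Finsupp.mem_support_iff.2 h3)
          have hv' : v = ![0,0,-2] + ![(k:ℤ), -(k:ℤ), -2*(m:ℤ)] := by
            rw [← he, add_neg_cancel_left]
          refine ⟨k, m+1, ?_, by omega, by omega⟩
          rw [hv', vec3_add]
          exact vec3_eq_iff.2 ⟨by push_cast; ring, by push_cast; ring, by push_cast; ring⟩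
        · obtain ⟨k, m, he, hle⟩ := ihG _ (Finsupp.mem_support_iff.2 h3)
          have hv' : v = ![0,-1,0] + ![(k:ℤ)+1, -(k:ℤ), -2*(m:ℤ)] := by
            rw [← he, add_neg_cancel_left]
          refine ⟨k+1, m, ?_, by omega, by omega⟩
          rw [hv', vec3_add]
          exact vec3_eq_iff.2 ⟨by push_cast; ring, by push_cast; ring, by push_cast; ring⟩
      · -- coefficient at (0,0,-2(n+1))
        rw [beta_succ_apply]
        have t1 : -![1,-1,0] + ![(0:ℤ), 0, -(2 * ((n:ℤ)+1))] = ![(-1:ℤ), 1, -(2*((n:ℤ)+1))] := by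
          rw [vec3_neg_add]
          exact vec3_eq_iff.2 ⟨by ring, by ring, by ring⟩
        have t2 : -![0,0,-2] + ![(0:ℤ), 0, -(2 * ((n:ℤ)+1))] = ![(0:ℤ), 0, -(2*(n:ℤ))] := by
          rw [vec3_neg_add]
          exact vec3_eq_iff.2 ⟨by ring, by ring, by ring⟩
        have t3 : -![0,-1,0] + ![(0:ℤ), 0, -(2 * ((n:ℤ)+1))] = ![(0:ℤ), 1, -(2*((n:ℤ)+1))] := by
          rw [vec3_neg_add]
          exact vec3_eq_iff.2 ⟨by ring, by ring, by ring⟩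
        have hc : ((n:ℤ)+1) = ((n+1 : ℕ) : ℤ) := by push_cast; ring
        rw [hc] at t1 t2 t3
        rw [t1, t2, t3]
        have z1 : (stmtBeta n).coeff ![(-1:ℤ), 1, -(2*((n+1:ℕ):ℤ))] = 0 := by
          by_contra hz
          obtain ⟨k, m, hv, hle, hk⟩ := ihS _ (Finsupp.mem_support_iff.2 hz)
          obtain ⟨e1, e2, e3⟩ := vec3_eq_iff.1 hv
          omega
        have z3 : (stmtGamma n).coeff ![(0:ℤ), 1, -(2*((n+1:ℕ):ℤ))] = 0 := by
          by_contra hz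
          obtain ⟨k, m, hv, hle⟩ := ihG _ (Finsupp.mem_support_iff.2 hz)
          obtain ⟨e1, e2, e3⟩ := vec3_eq_iff.1 hv
          omega
        rw [z1, z3, ihC]
        norm_num
      · -- coefficient at (1,-1,0)
        rw [beta_succ_apply]
        have t1 : -![1,-1,0] + ![(1:ℤ), -1, 0] = ![(0:ℤ), 0, 0] := by
          rw [vec3_neg_add]
          exact vec3_eq_iff.2 ⟨by ring, by ring, by ring⟩
        have t2 : -![0,0,-2] + ![(1:ℤ), -1, 0] = ![(1:ℤ), -1, 2] := by
          rw [vec3_neg_add]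
          exact vec3_eq_iff.2 ⟨by ring, by ring, by ring⟩
        have t3 : -![0,-1,0] + ![(1:ℤ), -1, 0] = ![(1:ℤ), 0, 0] := by
          rw [vec3_neg_add]
          exact vec3_eq_iff.2 ⟨by ring, by ring, by ring⟩
        rw [t1, t2, t3]
        have z2 : (stmtBeta n).coeff ![(1:ℤ), -1, 2] = 0 := by
          by_contra hz
          obtain ⟨k, m, hv, hle, hk⟩ := ihS _ (Finsupp.mem_support_iff.2 hz)
          obtain ⟨e1, e2, e3⟩ := vec3_eq_iff.1 hv
          omega
        rw [hz0, z2, ihD]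
        norm_num
      · -- coefficient at (n+1, -(n+1), 0)
        rw [beta_succ_apply]
        have hc : ((n:ℤ)+1) = ((n+1 : ℕ) : ℤ) := by push_cast; ring
        have t1 : -![1,-1,0] + ![((n+1:ℕ):ℤ), -((n+1:ℕ):ℤ), 0] = ![(n:ℤ), -(n:ℤ), 0] := by
          rw [vec3_neg_add]
          exact vec3_eq_iff.2 ⟨by push_cast; ring, by push_cast; ring, by ring⟩
        have t2 : -![0,0,-2] + ![((n+1:ℕ):ℤ), -((n+1:ℕ):ℤ), 0] =
            ![((n+1:ℕ):ℤ), -((n+1:ℕ):ℤ), 2] := by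
          rw [vec3_neg_add]
          exact vec3_eq_iff.2 ⟨by ring, by ring, by ring⟩
        have t3 : -![0,-1,0] + ![((n+1:ℕ):ℤ), -((n+1:ℕ):ℤ), 0] =
            ![((n+1:ℕ):ℤ), -((n+1:ℕ):ℤ)+1, 0] := by
          rw [vec3_neg_add]
          exact vec3_eq_iff.2 ⟨by ring, by ring, by ring⟩
        rw [t1, t2, t3]
        have z2 : (stmtBeta n).coeff ![((n+1:ℕ):ℤ), -((n+1:ℕ):ℤ), 2] = 0 := by
          by_contra hz
          obtain ⟨k, m, hv, hle, hk⟩ := ihS _ (Finsupp.mem_support_iff.2 hz)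
          obtain ⟨e1, e2, e3⟩ := vec3_eq_iff.1 hv
          omega
        have z3 : (stmtGamma n).coeff ![((n+1:ℕ):ℤ), -((n+1:ℕ):ℤ)+1, 0] = 0 := by
          by_contra hz
          obtain ⟨k, m, hv, hle⟩ := ihG _ (Finsupp.mem_support_iff.2 hz)
          obtain ⟨e1, e2, e3⟩ := vec3_eq_iff.1 hv
          omega
        rw [z2, z3, ihN]
        norm_num
      · -- support of gamma (n+1)
        intro v hv
        have h := Finsupp.mem_support_iff.1 hv
        rw [gamma_succ_apply] at h
        have h3 : (stmtBeta n).coeff (-![1,0,0] + v) ≠ 0 ∨ (stmtGamma n).coeff v ≠ 0 := by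
          by_contra hc
          push_neg at hc
          rw [hc.1, hc.2] at h
          simp at h
        rcases h3 with h3 | h3
        · obtain ⟨k, m, he, hle, hk⟩ := ihS _ (Finsupp.mem_support_iff.2 h3)
          have hv' : v = ![1,0,0] + ![(k:ℤ), -(k:ℤ), -2*(m:ℤ)] := by
            rw [← he, add_neg_cancel_left]
          refine ⟨k, m, ?_, by omega⟩
          rw [hv', vec3_add]
          exact vec3_eq_iff.2 ⟨by push_cast; ring, by push_cast; ring, by push_cast; ring⟩
        · obtain ⟨k, m, he, hle⟩ := ihG _ (Finsupp.mem_support_iff.2 h3)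
          exact ⟨k, m, he, by omega⟩
      · -- gamma coefficient at (1,0,0)
        rw [gamma_succ_apply]
        have t1 : -![1,0,0] + ![(1:ℤ), 0, 0] = ![(0:ℤ), 0, 0] := by
          rw [vec3_neg_add]
          exact vec3_eq_iff.2 ⟨by ring, by ring, by ring⟩
        rw [t1, hz0, ihD]
        norm_num
    · -- base case n = 0 (proving for 1)
      have hn0 : n = 0 := by omega
      subst hn0
      have hb : stmtBeta 1 = lmon ![1,-1,0] + lmon ![0,0,-2] := by
        rw [stmtBeta, pow_one]; rfl
      have hg : stmtGamma 1 = lmon ![1,0,0] := by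
        rw [stmtGamma, pow_one]; rfl
      refine ⟨?_, ?_, ?_, ?_, ?_, ?_⟩
      · intro v hv
        rw [hb, AddMonoidAlgebra.coeff_add] at hv
        rcases Finset.mem_union.1 (Finsupp.support_add hv) with hv' | hv'
        · rw [lmon, AddMonoidAlgebra.coeff_single] at hv'
          have : v = ![1,-1,0] := by
            simpa [lmon] using Finsupp.support_single_subset hv'
          exact ⟨1, 0, by rw [this]; exact vec3_eq_iff.2 ⟨by norm_num, by norm_num, by norm_num⟩,
            by omega, by omega⟩
        · rw [lmon, AddMonoidAlgebra.coeff_single] at hv'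
          have : v = ![0,0,-2] := by
            simpa [lmon] using Finsupp.support_single_subset hv'
          exact ⟨0, 1, by rw [this]; exact vec3_eq_iff.2 ⟨by norm_num, by norm_num, by norm_num⟩,
            by omega, by omega⟩
      · rw [hb, AddMonoidAlgebra.coeff_add, Finsupp.add_apply]
        simp [lmon, AddMonoidAlgebra.coeff_single, Finsupp.single_apply, vec3_eq_iff]
      · rw [hb, AddMonoidAlgebra.coeff_add, Finsupp.add_apply]
        simp [lmon, AddMonoidAlgebra.coeff_single, Finsupp.single_apply, vec3_eq_iff]
      · rw [hb, AddMonoidAlgebra.coeff_add, Finsupp.add_apply]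
        simp [lmon, AddMonoidAlgebra.coeff_single, Finsupp.single_apply, vec3_eq_iff]
      · intro v hv
        rw [hg, lmon, AddMonoidAlgebra.coeff_single] at hv
        have : v = ![1,0,0] := by
          simpa [lmon] using Finsupp.support_single_subset hv
        exact ⟨0, 0, by rw [this]; exact vec3_eq_iff.2 ⟨by norm_num, by norm_num, by norm_num⟩,
          by omega⟩
      · rw [hg]
        simp [lmon, AddMonoidAlgebra.coeff_single, Finsupp.single_apply]

lemma combo_mem (n k m : ℕ) (hn : 2 ≤ n) (hle : k + m ≤ n) (hk : 1 ≤ k ∨ m = n) :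
    (fun j => ((![(k:ℤ), -(k:ℤ), -2*(m:ℤ)] j : ℤ) : ℝ)) ∈
      convexHull ℝ {(fun j => ((![1, -1, 0] j : ℤ) : ℝ)),
        (fun j => ((![(n : ℤ), -(n : ℤ), 0] j : ℤ) : ℝ)),
        (fun j => ((![0, 0, -(2 * (n : ℤ))] j : ℤ) : ℝ))} := by
  set P1 : Fin 3 → ℝ := fun j => ((![1, -1, 0] j : ℤ) : ℝ) with hP1
  set P2 : Fin 3 → ℝ := fun j => ((![(n : ℤ), -(n : ℤ), 0] j : ℤ) : ℝ) with hP2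
  set P3 : Fin 3 → ℝ := fun j => ((![0, 0, -(2 * (n : ℤ))] j : ℤ) : ℝ) with hP3
  have hN2 : (2:ℝ) ≤ (n:ℝ) := by exact_mod_cast hn
  have hkm : (k:ℝ) + (m:ℝ) ≤ (n:ℝ) := by exact_mod_cast hle
  have hNpos : (0:ℝ) < (n:ℝ) := by linarith
  have hN1pos : (0:ℝ) < (n:ℝ) - 1 := by linarith
  set wA : ℝ := ((n:ℝ) - m - k) / ((n:ℝ) - 1) with hwA
  set wB : ℝ := ((n:ℝ)*k + m - n) / ((n:ℝ) * ((n:ℝ) - 1)) with hwB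
  set wC : ℝ := (m:ℝ) / (n:ℝ) with hwC
  have hwApos : 0 ≤ wA := div_nonneg (by linarith) (by linarith)
  have hwBpos : 0 ≤ wB := by
    apply div_nonneg _ (by positivity)
    rcases hk with hk | hk
    · have : (1:ℝ) ≤ (k:ℝ) := by exact_mod_cast hk
      nlinarith
    · have hm : (m:ℝ) = (n:ℝ) := by exact_mod_cast hk
      have : (0:ℝ) ≤ (n:ℝ)*k := by positivity
      linarith
  have hwCpos : 0 ≤ wC := div_nonneg (by positivity) (by linarith)
  have hsum : wA + wB + wC = 1 := by
    rw [hwA, hwB, hwC]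
    field_simp
    ring
  have hmem := Finset.centerMass_mem_convexHull (Finset.univ : Finset (Fin 3))
    (w := ![wA, wB, wC]) (z := ![P1, P2, P3])
    (fun i _ => by fin_cases i <;> simpa)
    (by rw [Fin.sum_univ_three]; simp only [Matrix.cons_val_zero, Matrix.cons_val_one,
        Matrix.head_cons, Matrix.cons_val_two, Matrix.tail_cons]; rw [hsum]; norm_num)
    (s := {P1, P2, P3}) (fun i _ => by fin_cases i <;> simp)
  have heq : (Finset.univ : Finset (Fin 3)).centerMass ![wA, wB, wC] ![P1, P2, P3]
      = (fun j => ((![(k:ℤ), -(k:ℤ), -2*(m:ℤ)] j : ℤ) : ℝ)) := by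
    rw [Finset.centerMass, Fin.sum_univ_three, Fin.sum_univ_three]
    simp only [Matrix.cons_val_zero, Matrix.cons_val_one, Matrix.head_cons,
      Matrix.cons_val_two, Matrix.tail_cons]
    rw [hsum, inv_one, one_smul]
    funext j
    fin_cases j <;> simp only [Fin.reduceFinMk] <;>
      simp only [Pi.add_apply, Pi.smul_apply, smul_eq_mul, hP1, hP2, hP3,
        Matrix.cons_val_zero, Matrix.cons_val_one, Matrix.head_cons,
        Matrix.cons_val_two, Matrix.tail_cons, Int.cast_one, Int.cast_neg,
        Int.cast_zero, Int.cast_mul, Int.cast_ofNat, Int.cast_natCast, Fin.isValue] <;>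
      rw [hwA, hwB, hwC] <;> field_simp <;> ring
  rw [heq] at hmem
  exact hmem


/-- For `n ≥ 2`, the monomials with exponent vectors `(0,0,−2n)`,
`(1,−1,0)` and `(n,−n,0)` appear in `β_n` with coefficient `1`, and the Newton
polytope of `β_n` (the convex hull in `ℝ³` of its support) is the convex hull of
`{(1,−1,0), (n,−n,0), (0,0,−2n)}`. -/
theorem stmt_8 (n : ℕ) (hn : 2 ≤ n) :
    (stmtBeta n).coeff ![0, 0, -(2 * (n : ℤ))] = 1 ∧
    (stmtBeta n).coeff ![1, -1, 0] = 1 ∧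
    (stmtBeta n).coeff ![(n : ℤ), -(n : ℤ), 0] = 1 ∧
    convexHull ℝ
        ((fun v : Fin 3 → ℤ => fun k => ((v k : ℤ) : ℝ)) '' ↑(stmtBeta n).coeff.support)
      = convexHull ℝ {(fun k => ((![1, -1, 0] k : ℤ) : ℝ)),
          (fun k => ((![(n : ℤ), -(n : ℤ), 0] k : ℤ) : ℝ)),
          (fun k => ((![0, 0, -(2 * (n : ℤ))] k : ℤ) : ℝ))} := by
  obtain ⟨hS, hC, hA, hN, -, -⟩ := key n (by omega)
  refine ⟨hC, hA, hN, Set.Subset.antisymm ?_ ?_⟩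
  · apply convexHull_min _ (convex_convexHull ℝ _)
    rintro p ⟨v, hv, rfl⟩
    obtain ⟨k, m, rfl, hle, hk⟩ := hS v (Finset.mem_coe.1 hv)
    exact combo_mem n k m hn hle hk
  · apply convexHull_mono
    rintro p (rfl | rfl | rfl)
    · exact ⟨![1, -1, 0], Finset.mem_coe.2 (Finsupp.mem_support_iff.2 (by
        rw [hA]; exact one_ne_zero)), rfl⟩
    · exact ⟨![(n : ℤ), -(n : ℤ), 0], Finset.mem_coe.2 (Finsupp.mem_support_iff.2 (by
        rw [hN]; exact one_ne_zero)), rfl⟩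
    · exact ⟨![0, 0, -(2 * (n : ℤ))], Finset.mem_coe.2 (Finsupp.mem_support_iff.2 (by
        rw [hC]; exact one_ne_zero)), rfl⟩
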